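/- arXiv:1509.01859 — 2 statements merged into one kernel-verified Lean document; each statement's English description precedes it below -/
import Mathlib

section
/- The two-sided sequence x : ℤ → ℝ defined by x_n = 1/n for n ≠ 0 and x_0 = 0 is not rankable; that is, there exists no bijection P : ℤ → ℤ such that x_{P(k)} ≤ x_{P(l)} whenever k ≤ l. -/
/-!
If `x ∘ P` is monotone, then `P⁻¹` is strictly monotone along strict increases of `x`, so it maps
every index `n` with `x a < x n < x b` injectively into the finite interval `(P⁻¹ a, P⁻¹ b)`.
Hence for a rankable sequence indexed by `ℤ` only finitely many indices `n` satisfy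
`x a < x n < x b`. For `x n = 1/n` every `n > 1` has `x 0 < x n < x 1`.
-/

open Set

def Rankable {ι β : Type*} [Preorder ι] [Preorder β] (x : ι → β) : Prop :=
  ∃ P : ι ≃ ι, Monotone (x ∘ P)

theorem Rankable.finite_preimage_Ioo {ι β : Type*} [LinearOrder ι] [LocallyFiniteOrder ι]
    [Preorder β] {x : ι → β} (hx : Rankable x) (a b : ι) :
    (x ⁻¹' Ioo (x a) (x b)).Finite := by
  obtain ⟨P, hP⟩ := hx
  have hlt {m n : ι} (h : x m < x n) : P.symm m < P.symm n :=
    hP.reflect_lt (by simpa only [Function.comp_apply, Equiv.apply_symm_apply] using h)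
  refine ((finite_Ioo (P.symm a) (P.symm b)).preimage P.symm.injective.injOn).subset ?_
  exact fun n ⟨han, hnb⟩ => ⟨hlt han, hlt hnb⟩

/-- The two-sided sequence `x n = 1/n` for `n ≠ 0`, `x 0 = 0`, is not rankable. -/
theorem stmt_0 :
    ¬ ∃ P : ℤ ≃ ℤ, ∀ k l : ℤ, k ≤ l →
      (fun n : ℤ => if n = 0 then (0 : ℝ) else (n : ℝ)⁻¹) (P k) ≤
      (fun n : ℤ => if n = 0 then (0 : ℝ) else (n : ℝ)⁻¹) (P l) := by
  show ¬ Rankable fun n : ℤ => if n = 0 then (0 : ℝ) else (n : ℝ)⁻¹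
  intro hx
  have hfin := hx.finite_preimage_Ioo 0 1
  refine (Ioi_infinite (1 : ℤ)).mono (fun n (hn : 1 < n) => ?_) hfin
  have hn' : (1 : ℝ) < n := by exact_mod_cast hn
  have hn0 : n ≠ 0 := by omega
  simp only [mem_preimage, mem_Ioo, hn0, one_ne_zero, ↓reduceIte, Int.cast_one, inv_one]
  exact ⟨inv_pos.mpr (by linarith), inv_lt_one_of_one_lt₀ hn'⟩
end

section
/- If P and P' are two ranking permutations of the same rankable sequence x ∈ ℝ^ℤ (both nondecreasing along ranks and resolving ties in lexicographic order), then there exists m ∈ ℤ such that P(k) = P'(k + m) for all k ∈ ℤ. -/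
/-!
The ranking conditions say exactly that `k ↦ (x (P k), P k)` is strictly monotone into the
lexicographic product. Hence `Q = P'⁻¹ ∘ P` is strictly monotone, being `f'⁻¹ ∘ f` for two
strictly monotone keys `f, f'` with `f' ∘ Q = f`. An order automorphism of `ℤ` commutes with
the successor, so it is a translation.
-/

theorem strictMono_toLex_of_ranking {ι α β : Type*} [Preorder ι] [PartialOrder α] [Preorder β]
    {x : β → α} {P : ι → β} (hP : ∀ k l : ι, k ≤ l → x (P k) ≤ x (P l))
    (hPlex : ∀ k l : ι, k < l → x (P k) = x (P l) → P k < P l) :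
    StrictMono fun k => toLex (x (P k), P k) :=
  fun k l hkl => Prod.Lex.toLex_lt_toLex'.2 ⟨hP k l hkl.le, hPlex k l hkl⟩

theorem StrictMono.of_comp_eq {ι γ : Type*} [LinearOrder ι] [Preorder γ] {f f' : ι → γ}
    {Q : ι → ι} (hf : StrictMono f) (hf' : StrictMono f') (hQ : ∀ k, f' (Q k) = f k) :
    StrictMono Q :=
  fun k l hkl => hf'.lt_iff_lt.1 <| by simpa only [hQ] using hf hkl

theorem Int.exists_eq_add_of_strictMono {Q : ℤ ≃ ℤ} (hQ : StrictMono Q) :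
    ∃ m : ℤ, ∀ k : ℤ, Q k = k + m := by
  let e : ℤ ≃o ℤ := hQ.orderIsoOfSurjective Q Q.surjective
  have step (k : ℤ) : Q (k + 1) = Q k + 1 := by
    have h := e.map_succ k
    rw [Order.succ_eq_add_one, Order.succ_eq_add_one] at h
    exact h
  refine ⟨Q 0, fun k => ?_⟩
  induction k using Int.induction_on with
  | zero => simp
  | succ n ih => rw [step, ih]; ring
  | pred n ih => have := step (-n - 1); simp only [sub_add_cancel] at this; omega

/-- Two ranking permutations (nondecreasing along ranks, resolving ties lexicographically)
of the same sequence `x : ℤ → ℝ` differ by a shift. -/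
theorem stmt_1 (x : ℤ → ℝ) (P P' : ℤ ≃ ℤ)
    (hP : ∀ k l : ℤ, k ≤ l → x (P k) ≤ x (P l))
    (hPlex : ∀ k l : ℤ, k < l → x (P k) = x (P l) → P k < P l)
    (hP' : ∀ k l : ℤ, k ≤ l → x (P' k) ≤ x (P' l))
    (hP'lex : ∀ k l : ℤ, k < l → x (P' k) = x (P' l) → P' k < P' l) :
    ∃ m : ℤ, ∀ k : ℤ, P k = P' (k + m) := by
  have hQ : StrictMono (P.trans P'.symm) :=
    (strictMono_toLex_of_ranking hP hPlex).of_comp_eq (strictMono_toLex_of_ranking hP' hP'lex)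
      fun k => by simp
  obtain ⟨m, hm⟩ := Int.exists_eq_add_of_strictMono hQ
  exact ⟨m, fun k => by simp [← hm]⟩
end
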